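/- Let θ₁, θ₂ ∈ Λ₁ be odd, let h_A, h_B, h_C ∈ Λ₀ be even and invertible, and set c_θ := 1 + θ₁θ₂/6 and, for even invertible h, k, the general prime transformation P^θ_{h,k} := Z_{c_θ}∘Z_{k}⁻¹∘P′∘Z_{h}, where P′ := [[θ₁θ₂/2 − 1, θ₁, 1],[−θ₂, 1, 0],[−1, 0, 0]] and Z_a := diag(a, a², a). Then P^θ_{h_A,h_B} ∘ P^θ_{h_C,h_A} ∘ P^θ_{h_B,h_C} = I (the 3×3 identity matrix). -/
import Mathlib


/- STATEMENT 6: the general prime transformations satisfy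
P^θ_{h_A,h_B} ∘ P^θ_{h_C,h_A} ∘ P^θ_{h_B,h_C} = 1. -/

noncomputable section

variable {V : Type*} [AddCommGroup V] [Module ℝ V]

/-- Membership in the even part Λ₀ of the Grassmann algebra. -/
def IsEven (x : ExteriorAlgebra ℝ V) : Prop :=
  x ∈ CliffordAlgebra.evenOdd (0 : QuadraticForm ℝ V) 0

/-- Membership in the odd part Λ₁ of the Grassmann algebra. -/
def IsOdd (x : ExteriorAlgebra ℝ V) : Prop :=
  x ∈ CliffordAlgebra.evenOdd (0 : QuadraticForm ℝ V) 1

/-- The odd positions of a 3×3 supermatrix. -/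
def oddPos (i j : Fin 3) : Bool := (i == 1) != (j == 1)

/-- The super matrix product. -/
def sMul {A : Type*} [Ring A] (M N : Matrix (Fin 3) (Fin 3) A) :
    Matrix (Fin 3) (Fin 3) A :=
  Matrix.of fun i j => ∑ k : Fin 3,
    if oddPos i k && oddPos k j then -(M i k * N k j) else M i k * N k j

/-- `Z_a = diag(a, a², a)`. -/
def Zmat {A : Type*} [Ring A] (a : A) : Matrix (Fin 3) (Fin 3) A :=
  !![a, 0, 0; 0, a * a, 0; 0, 0, a]

/-- The prime transformation `P′`. -/
def Pprime (θ₁ θ₂ : ExteriorAlgebra ℝ V) :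
    Matrix (Fin 3) (Fin 3) (ExteriorAlgebra ℝ V) :=
  !![(1/2 : ℝ) • (θ₁ * θ₂) - 1, θ₁, 1; -θ₂, 1, 0; -1, 0, 0]

/-- The general prime transformation `P^θ_{h,k} = Z_{c_θ}∘Z_{k}⁻¹∘P′∘Z_{h}`, expressed
via an inverse `kinv` of `k` (so `Z_k⁻¹ = Z_{kinv}`), with `c_θ := 1 + θ₁θ₂/6`. -/
def Pgen (θ₁ θ₂ h kinv : ExteriorAlgebra ℝ V) :
    Matrix (Fin 3) (Fin 3) (ExteriorAlgebra ℝ V) :=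
  sMul (sMul (sMul (Zmat (1 + (1/6 : ℝ) • (θ₁ * θ₂))) (Zmat kinv))
    (Pprime θ₁ θ₂)) (Zmat h)

/- ### Auxiliary lemmas -/

open CliffordAlgebra in
lemma aux_iota_swap (v w : V) :
    ι (0 : QuadraticForm ℝ V) v * ι 0 w = -(ι 0 w * ι 0 v) := by
  have h : ι (0 : QuadraticForm ℝ V) v * ι 0 w + ι 0 w * ι 0 v = 0 := by
    simpa using ι_mul_ι_add_swap (Q := (0 : QuadraticForm ℝ V)) v w
  exact eq_neg_of_add_eq_zero_left h

open CliffordAlgebra in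
lemma aux_iota_mul_even (v : V) (x : ExteriorAlgebra ℝ V) (hx : IsEven x) :
    ι (0 : QuadraticForm ℝ V) v * x = x * ι 0 v := by
  induction x, hx using CliffordAlgebra.even_induction with
  | algebraMap r => rw [Algebra.commutes]
  | add a b ha hb iha ihb => rw [mul_add, add_mul, iha, ihb]
  | ι_mul_ι_mul m₁ m₂ a ha ih =>
      calc ι (0 : QuadraticForm ℝ V) v * (ι 0 m₁ * ι 0 m₂ * a)
          = (ι (0 : QuadraticForm ℝ V) v * ι 0 m₁) * (ι 0 m₂ * a) := by
            noncomm_ring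
        _ = -(ι (0 : QuadraticForm ℝ V) m₁ * ((ι 0 v * ι 0 m₂) * a)) := by
            rw [aux_iota_swap]; noncomm_ring
        _ = -(ι (0 : QuadraticForm ℝ V) m₁ * (-(ι 0 m₂ * ι 0 v) * a)) := by
            rw [aux_iota_swap]
        _ = ι (0 : QuadraticForm ℝ V) m₁ * ι 0 m₂ * (ι 0 v * a) := by
            noncomm_ring
        _ = ι (0 : QuadraticForm ℝ V) m₁ * ι 0 m₂ * a * ι 0 v := by
            rw [ih]; noncomm_ring

open CliffordAlgebra in
lemma aux_iota_mul_odd (v : V) (x : ExteriorAlgebra ℝ V) (hx : IsOdd x) :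
    ι (0 : QuadraticForm ℝ V) v * x = -(x * ι 0 v) := by
  induction x, hx using CliffordAlgebra.odd_induction with
  | ι w => exact aux_iota_swap v w
  | add a b ha hb iha ihb => rw [mul_add, add_mul, iha, ihb]; abel
  | ι_mul_ι_mul m₁ m₂ a ha ih =>
      calc ι (0 : QuadraticForm ℝ V) v * (ι 0 m₁ * ι 0 m₂ * a)
          = (ι (0 : QuadraticForm ℝ V) v * ι 0 m₁) * (ι 0 m₂ * a) := by
            noncomm_ring
        _ = -(ι (0 : QuadraticForm ℝ V) m₁ * ((ι 0 v * ι 0 m₂) * a)) := by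
            rw [aux_iota_swap]; noncomm_ring
        _ = -(ι (0 : QuadraticForm ℝ V) m₁ * (-(ι 0 m₂ * ι 0 v) * a)) := by
            rw [aux_iota_swap]
        _ = ι (0 : QuadraticForm ℝ V) m₁ * ι 0 m₂ * (ι 0 v * a) := by
            noncomm_ring
        _ = -(ι (0 : QuadraticForm ℝ V) m₁ * ι 0 m₂ * a * ι 0 v) := by
            rw [ih]; noncomm_ring

open CliffordAlgebra in
lemma aux_even_central (x : ExteriorAlgebra ℝ V) (hx : IsEven x)
    (y : ExteriorAlgebra ℝ V) : x * y = y * x := by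
  induction y using CliffordAlgebra.induction with
  | algebraMap r => rw [Algebra.commutes]
  | ι v => exact (aux_iota_mul_even v x hx).symm
  | mul a b iha ihb => rw [← mul_assoc, iha, mul_assoc, ihb, mul_assoc]
  | add a b iha ihb => rw [mul_add, add_mul, iha, ihb]

open CliffordAlgebra in
lemma aux_odd_anticomm (x y : ExteriorAlgebra ℝ V) (hx : IsOdd x) (hy : IsOdd y) :
    x * y = -(y * x) := by
  induction x, hx using CliffordAlgebra.odd_induction with
  | ι v => exact aux_iota_mul_odd v y hy
  | add a b ha hb iha ihb => rw [add_mul, mul_add, iha, ihb]; abel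
  | ι_mul_ι_mul m₁ m₂ a ha ih =>
      calc ι (0 : QuadraticForm ℝ V) m₁ * ι 0 m₂ * a * y
          = ι (0 : QuadraticForm ℝ V) m₁ * ι 0 m₂ * (a * y) := by noncomm_ring
        _ = -(ι (0 : QuadraticForm ℝ V) m₁ * ι 0 m₂ * (y * a)) := by rw [ih]; noncomm_ring
        _ = -(ι (0 : QuadraticForm ℝ V) m₁ * (ι 0 m₂ * y) * a) := by noncomm_ring
        _ = ι (0 : QuadraticForm ℝ V) m₁ * (y * ι 0 m₂) * a := by
            rw [aux_iota_mul_odd m₂ y hy]; noncomm_ring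
        _ = (ι (0 : QuadraticForm ℝ V) m₁ * y) * ι 0 m₂ * a := by noncomm_ring
        _ = -(y * ι (0 : QuadraticForm ℝ V) m₁) * ι 0 m₂ * a := by
            rw [aux_iota_mul_odd m₁ y hy]
        _ = -(y * (ι (0 : QuadraticForm ℝ V) m₁ * ι 0 m₂ * a)) := by noncomm_ring

section MatrixAux
variable {A : Type*} [Ring A]

lemma aux_sMul_assoc (M N P : Matrix (Fin 3) (Fin 3) A) :
    sMul (sMul M N) P = sMul M (sMul N P) := by
  ext i j
  fin_cases i <;> fin_cases j <;>
    simp [sMul, oddPos, Fin.sum_univ_three] <;> noncomm_ring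

lemma aux_Zmerge (a b : A) (X : Matrix (Fin 3) (Fin 3) A) (h : a * b = b * a) :
    sMul (Zmat a) (sMul (Zmat b) X) = sMul (Zmat (a * b)) X := by
  have hba : ∀ x : A, b * (a * x) = a * (b * x) := fun x => by
    rw [← mul_assoc, ← h, mul_assoc]
  ext i j
  fin_cases i <;> fin_cases j <;>
    simp [sMul, Zmat, oddPos, Fin.sum_univ_three, mul_assoc, hba,
      Matrix.cons_val', Matrix.cons_val_zero, Matrix.cons_val_one, Matrix.head_cons,
      Matrix.head_fin_const, Matrix.empty_val', Matrix.cons_val_fin_one, Matrix.vecHead,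
      Matrix.vecTail, Function.comp]

lemma aux_ZmatMul (a b : A) (h : a * b = b * a) :
    sMul (Zmat a) (Zmat b) = Zmat (a * b) := by
  have hba : ∀ x : A, b * (a * x) = a * (b * x) := fun x => by
    rw [← mul_assoc, ← h, mul_assoc]
  ext i j
  fin_cases i <;> fin_cases j <;>
    simp [sMul, Zmat, oddPos, Fin.sum_univ_three, mul_assoc, hba,
      Matrix.cons_val', Matrix.cons_val_zero, Matrix.cons_val_one, Matrix.head_cons,
      Matrix.head_fin_const, Matrix.empty_val', Matrix.cons_val_fin_one, Matrix.vecHead,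
      Matrix.vecTail, Function.comp]

lemma aux_Zmat_one : Zmat (1 : A) = 1 := by
  ext i j
  fin_cases i <;> fin_cases j <;>
    simp [Zmat, Matrix.one_apply, Matrix.cons_val', Matrix.cons_val_zero,
      Matrix.cons_val_one, Matrix.head_cons, Matrix.head_fin_const,
      Matrix.empty_val', Matrix.cons_val_fin_one, Matrix.vecHead, Matrix.vecTail,
      Function.comp]

end MatrixAux

set_option maxHeartbeats 1600000 in
lemma aux_core (θ₁ θ₂ : ExteriorAlgebra ℝ V)
    (h11 : θ₁ * θ₁ = 0) (h22 : θ₂ * θ₂ = 0) (h21 : θ₂ * θ₁ = -(θ₁ * θ₂)) :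
    sMul (sMul (sMul (sMul (Pprime θ₁ θ₂) (Zmat (1 + (1/6 : ℝ) • (θ₁ * θ₂))))
        (Pprime θ₁ θ₂)) (Zmat (1 + (1/6 : ℝ) • (θ₁ * θ₂)))) (Pprime θ₁ θ₂) =
      Zmat (1 - (1/6 : ℝ) • (θ₁ * θ₂)) := by
  have h11' : ∀ x, θ₁ * (θ₁ * x) = 0 := fun x => by rw [← mul_assoc, h11, zero_mul]
  have h22' : ∀ x, θ₂ * (θ₂ * x) = 0 := fun x => by rw [← mul_assoc, h22, zero_mul]
  have h21' : ∀ x, θ₂ * (θ₁ * x) = -(θ₁ * (θ₂ * x)) := fun x => by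
    rw [← mul_assoc, h21, neg_mul, mul_assoc]
  have step1 : sMul (Pprime θ₁ θ₂) (Zmat (1 + (1/6 : ℝ) • (θ₁ * θ₂))) =
      !![(1/3 : ℝ) • (θ₁ * θ₂) - 1, θ₁, 1 + (1/6 : ℝ) • (θ₁ * θ₂);
         -θ₂, 1 + (1/3 : ℝ) • (θ₁ * θ₂), 0;
         -(1 + (1/6 : ℝ) • (θ₁ * θ₂)), 0, 0] := by
    ext i j
    fin_cases i <;> fin_cases j <;>
      simp [sMul, Zmat, Pprime, oddPos, Fin.sum_univ_three, mul_add, add_mul,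
        mul_sub, sub_mul, mul_assoc, smul_mul_assoc, mul_smul_comm, smul_smul,
        h11, h22, h21, h11', h22', h21', smul_sub, smul_add,
        Matrix.cons_val', Matrix.cons_val_zero, Matrix.cons_val_one, Matrix.head_cons,
        Matrix.head_fin_const, Matrix.empty_val', Matrix.cons_val_fin_one,
        Matrix.vecHead, Matrix.vecTail, Function.comp] <;>
      module
  have step2 : sMul (!![(1/3 : ℝ) • (θ₁ * θ₂) - 1, θ₁, 1 + (1/6 : ℝ) • (θ₁ * θ₂);
         -θ₂, 1 + (1/3 : ℝ) • (θ₁ * θ₂), 0;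
         -(1 + (1/6 : ℝ) • (θ₁ * θ₂)), 0, 0]) (Pprime θ₁ θ₂) =
      !![0, 0, (1/3 : ℝ) • (θ₁ * θ₂) - 1;
         0, 1 - (2/3 : ℝ) • (θ₁ * θ₂), -θ₂;
         1 - (1/3 : ℝ) • (θ₁ * θ₂), -θ₁, -1 - (1/6 : ℝ) • (θ₁ * θ₂)] := by
    ext i j
    fin_cases i <;> fin_cases j <;>
      simp [sMul, Pprime, oddPos, Fin.sum_univ_three, mul_add, add_mul,
        mul_sub, sub_mul, mul_assoc, smul_mul_assoc, mul_smul_comm, smul_smul,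
        h11, h22, h21, h11', h22', h21', smul_sub, smul_add,
        Matrix.cons_val', Matrix.cons_val_zero, Matrix.cons_val_one, Matrix.head_cons,
        Matrix.head_fin_const, Matrix.empty_val', Matrix.cons_val_fin_one,
        Matrix.vecHead, Matrix.vecTail, Function.comp] <;>
      module
  have step3 : sMul (!![0, 0, (1/3 : ℝ) • (θ₁ * θ₂) - 1;
         0, 1 - (2/3 : ℝ) • (θ₁ * θ₂), -θ₂;
         1 - (1/3 : ℝ) • (θ₁ * θ₂), -θ₁, -1 - (1/6 : ℝ) • (θ₁ * θ₂)])
        (Zmat (1 + (1/6 : ℝ) • (θ₁ * θ₂))) =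
      !![0, 0, (1/6 : ℝ) • (θ₁ * θ₂) - 1;
         0, 1 - (1/3 : ℝ) • (θ₁ * θ₂), -θ₂;
         1 - (1/6 : ℝ) • (θ₁ * θ₂), -θ₁, -1 - (1/3 : ℝ) • (θ₁ * θ₂)] := by
    ext i j
    fin_cases i <;> fin_cases j <;>
      simp [sMul, Zmat, oddPos, Fin.sum_univ_three, mul_add, add_mul,
        mul_sub, sub_mul, mul_assoc, smul_mul_assoc, mul_smul_comm, smul_smul,
        h11, h22, h21, h11', h22', h21', smul_sub, smul_add,
        Matrix.cons_val', Matrix.cons_val_zero, Matrix.cons_val_one, Matrix.head_cons,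
        Matrix.head_fin_const, Matrix.empty_val', Matrix.cons_val_fin_one,
        Matrix.vecHead, Matrix.vecTail, Function.comp] <;>
      module
  have step4 : sMul (!![0, 0, (1/6 : ℝ) • (θ₁ * θ₂) - 1;
         0, 1 - (1/3 : ℝ) • (θ₁ * θ₂), -θ₂;
         1 - (1/6 : ℝ) • (θ₁ * θ₂), -θ₁, -1 - (1/3 : ℝ) • (θ₁ * θ₂)]) (Pprime θ₁ θ₂) =
      Zmat (1 - (1/6 : ℝ) • (θ₁ * θ₂)) := by
    ext i j
    fin_cases i <;> fin_cases j <;>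
      simp [sMul, Zmat, Pprime, oddPos, Fin.sum_univ_three, mul_add, add_mul,
        mul_sub, sub_mul, mul_assoc, smul_mul_assoc, mul_smul_comm, smul_smul,
        h11, h22, h21, h11', h22', h21', smul_sub, smul_add,
        Matrix.cons_val', Matrix.cons_val_zero, Matrix.cons_val_one, Matrix.head_cons,
        Matrix.head_fin_const, Matrix.empty_val', Matrix.cons_val_fin_one,
        Matrix.vecHead, Matrix.vecTail, Function.comp] <;>
      module
  rw [step1, step2, step3, step4]

lemma aux_core' (θ₁ θ₂ : ExteriorAlgebra ℝ V)
    (h11 : θ₁ * θ₁ = 0) (h22 : θ₂ * θ₂ = 0) (h21 : θ₂ * θ₁ = -(θ₁ * θ₂))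
    (X : Matrix (Fin 3) (Fin 3) (ExteriorAlgebra ℝ V)) :
    sMul (Pprime θ₁ θ₂) (sMul (Zmat (1 + (1/6 : ℝ) • (θ₁ * θ₂)))
      (sMul (Pprime θ₁ θ₂) (sMul (Zmat (1 + (1/6 : ℝ) • (θ₁ * θ₂)))
        (sMul (Pprime θ₁ θ₂) X)))) =
      sMul (Zmat (1 - (1/6 : ℝ) • (θ₁ * θ₂))) X := by
  rw [← aux_sMul_assoc, ← aux_sMul_assoc, ← aux_sMul_assoc, ← aux_sMul_assoc,
    aux_core θ₁ θ₂ h11 h22 h21]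

theorem stmt6 (θ₁ θ₂ : ExteriorAlgebra ℝ V) (hθ₁ : IsOdd θ₁) (hθ₂ : IsOdd θ₂)
    (hA hB hC hAi hBi hCi : ExteriorAlgebra ℝ V)
    (hhA : IsEven hA) (hhB : IsEven hB) (hhC : IsEven hC)
    (hA1 : hA * hAi = 1) (hA2 : hAi * hA = 1)
    (hB1 : hB * hBi = 1) (hB2 : hBi * hB = 1)
    (hC1 : hC * hCi = 1) (hC2 : hCi * hC = 1) :
    sMul (sMul (Pgen θ₁ θ₂ hA hBi) (Pgen θ₁ θ₂ hC hAi)) (Pgen θ₁ θ₂ hB hCi) =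
      (1 : Matrix (Fin 3) (Fin 3) (ExteriorAlgebra ℝ V)) := by
  -- scalar facts
  have h21 : θ₂ * θ₁ = -(θ₁ * θ₂) := aux_odd_anticomm θ₂ θ₁ hθ₂ hθ₁
  have sq_zero : ∀ t : ExteriorAlgebra ℝ V, IsOdd t → t * t = 0 := by
    intro t ht
    have h := aux_odd_anticomm t t ht ht
    have h2 : t * t + t * t = 0 := add_eq_zero_iff_eq_neg.mpr h
    calc t * t = (1/2 : ℝ) • (t * t + t * t) := by
          rw [← two_smul ℝ, smul_smul]; norm_num
      _ = 0 := by rw [h2, smul_zero]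
  have h11 : θ₁ * θ₁ = 0 := sq_zero θ₁ hθ₁
  have h22 : θ₂ * θ₂ = 0 := sq_zero θ₂ hθ₂
  have hw : IsEven (θ₁ * θ₂) := by
    have h := SetLike.mul_mem_graded hθ₁ hθ₂
    have : (1 + 1 : ZMod 2) = 0 := by decide
    rw [this] at h
    exact h
  have hwC : ∀ x, (θ₁ * θ₂) * x = x * (θ₁ * θ₂) := aux_even_central _ hw
  have hAc : ∀ x, hA * x = x * hA := aux_even_central _ hhA
  have hBc : ∀ x, hB * x = x * hB := aux_even_central _ hhB
  have hCc : ∀ x, hC * x = x * hC := aux_even_central _ hhC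
  have inv_central : ∀ a ai : ExteriorAlgebra ℝ V, (∀ x, a * x = x * a) →
      a * ai = 1 → ai * a = 1 → ∀ x, ai * x = x * ai := by
    intro a ai hac h1 h2 x
    calc ai * x = ai * x * (a * ai) := by rw [h1, mul_one]
      _ = ai * (x * a) * ai := by rw [mul_assoc, mul_assoc, mul_assoc]
      _ = ai * (a * x) * ai := by rw [hac]
      _ = (ai * a) * (x * ai) := by rw [mul_assoc, mul_assoc, mul_assoc]
      _ = x * ai := by rw [h2, one_mul]
  have hAic := inv_central hA hAi hAc hA1 hA2
  have hBic := inv_central hB hBi hBc hB1 hB2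
  have hCic := inv_central hC hCi hCc hC1 hC2
  set c : ExteriorAlgebra ℝ V := 1 + (1/6 : ℝ) • (θ₁ * θ₂) with hc
  set ci : ExteriorAlgebra ℝ V := 1 - (1/6 : ℝ) • (θ₁ * θ₂) with hci
  have hcC : ∀ x, c * x = x * c := by
    intro x
    rw [hc, add_mul, mul_add, one_mul, mul_one, smul_mul_assoc, mul_smul_comm, hwC]
  have hciC : ∀ x, ci * x = x * ci := by
    intro x
    rw [hci, sub_mul, mul_sub, one_mul, mul_one, smul_mul_assoc, mul_smul_comm, hwC]
  have hww : (θ₁ * θ₂) * (θ₁ * θ₂) = 0 := by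
    rw [mul_assoc, ← mul_assoc θ₂ θ₁ θ₂, h21, neg_mul, mul_assoc, h22,
      mul_zero, mul_neg, mul_zero, neg_zero]
  have hcci : c * ci = 1 := by
    have key : (θ₁ * θ₂) * ((1/6 : ℝ) • (θ₁ * θ₂)) = 0 := by
      rw [mul_smul_comm, hww, smul_zero]
    rw [hc, hci, mul_sub, mul_one, add_mul, one_mul, smul_mul_assoc, key,
      smul_zero]
    abel
  -- matrix computation
  simp only [Pgen, aux_sMul_assoc]
  rw [aux_Zmerge hA c _ (hAc c), aux_Zmerge (hA * c) hAi _ ((hAic (hA * c)).symm)]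
  have eA : hA * c * hAi = c := by rw [hAc c, mul_assoc, hA1, mul_one]
  rw [eA]
  rw [aux_Zmerge hC c _ (hCc c), aux_Zmerge (hC * c) hCi _ ((hCic (hC * c)).symm)]
  have eC : hC * c * hCi = c := by rw [hCc c, mul_assoc, hC1, mul_one]
  rw [eC]
  rw [aux_core' θ₁ θ₂ h11 h22 h21]
  rw [aux_Zmerge hBi ci _ ((hciC hBi).symm ▸ (hBic ci)),
    aux_Zmerge c (hBi * ci) _ (hcC (hBi * ci)),
    aux_ZmatMul (c * (hBi * ci)) hB (hBc (c * (hBi * ci))).symm]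
  have : c * (hBi * ci) * hB = 1 := by
    rw [← hciC hBi, ← mul_assoc, hcci, one_mul, hB2]
  rw [this, aux_Zmat_one]
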